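/- arXiv:1308.4884 — 2 statements merged into one kernel-verified Lean document; each statement's English description precedes it below -/
import Mathlib

section
/- There exist constants C > 0 and l > 0, depending only on β, θ and μ (C being a Lipschitz constant of F₁⁻¹ on [0, F₁(1)] and l any constant with (G∘F₁⁻¹)' < -l on (0, F₁(1))), such that for all x₀¹, x₀² ∈ (0,1) and all t ∈ ℝ₊, |x_t(x₀¹) - x_t(x₀²)| ≤ C · |F₁(x₀¹) - F₁(x₀²)| · e^{-lt}, where x_t(x₀ⁱ) := F₁⁻¹(y_t(F₁(x₀ⁱ))). -/
/-
Two solutions driven by the same noise differ by a differentiable function D = y¹ - y², the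
noise cancelling, with D' = h(y¹) - h(y²) for h = G ∘ F₁⁻¹. The derivative of
x ↦ G x + θ(1-β) F₁ x is -θβ[x(1-x)]^{-β-1}((x-μ)² + μ(1-μ)) ≤ 0, so h + θ(1-β)·id is
nonincreasing and D D' ≤ -θ(1-β) D²; hence D² e^{2θ(1-β)t} is nonincreasing. As F₁' ≥ 1,
F₁⁻¹ is 1-Lipschitz, which gives C = 1 and l = θ(1-β).
-/

noncomputable def F1 (β y : ℝ) : ℝ := ∫ v in (0:ℝ)..y, (v * (1 - v)) ^ (-β)

noncomputable def F1inv (β z : ℝ) : ℝ := Function.invFunOn (F1 β) (Set.Icc 0 1) z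

noncomputable def G (β θ μ x : ℝ) : ℝ := θ * (μ - x) * (x * (1 - x)) ^ (-β)

open MeasureTheory Set Filter

lemma abs_sub_le_abs_sub_of_sub_le_sub {f : ℝ → ℝ} {s : Set ℝ}
    (hf : ∀ a ∈ s, ∀ b ∈ s, a ≤ b → b - a ≤ f b - f a) {a b : ℝ}
    (ha : a ∈ s) (hb : b ∈ s) :
    |a - b| ≤ |f a - f b| := by
  rcases le_total a b with hab | hba
  · rw [abs_sub_comm, abs_of_nonneg (sub_nonneg.2 hab), abs_sub_comm]
    exact (hf a ha b hb hab).trans (le_abs_self _)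
  · rw [abs_of_nonneg (sub_nonneg.2 hba)]
    exact (hf b hb a ha hba).trans (le_abs_self _)

lemma sub_mul_sub_le_of_antitoneOn_add_mul {g : ℝ → ℝ} {s : Set ℝ} {l : ℝ}
    (hg : AntitoneOn (fun z => g z + l * z) s) {a b : ℝ} (ha : a ∈ s) (hb : b ∈ s) :
    (a - b) * (g a - g b) ≤ -l * (a - b) ^ 2 := by
  rcases le_total a b with hab | hba
  · nlinarith [hg ha hb hab]
  · nlinarith [hg hb ha hba]

lemma abs_le_abs_mul_exp_of_hasDerivAt {D D' : ℝ → ℝ} {l : ℝ} (hc : ContinuousOn D (Ici 0))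
    (hD : ∀ τ > 0, HasDerivAt D (D' τ) τ) (hdiss : ∀ τ > 0, D τ * D' τ ≤ -l * D τ ^ 2)
    {t : ℝ} (ht : 0 ≤ t) :
    |D t| ≤ |D 0| * Real.exp (-l * t) := by
  set V : ℝ → ℝ := fun u => D u ^ 2 * Real.exp (2 * l * u)
  set V' : ℝ → ℝ := fun τ => 2 * (D τ * D' τ + l * D τ ^ 2) * Real.exp (2 * l * τ)
  have hV : ∀ τ > 0, HasDerivAt V (V' τ) τ := by
    intro τ hτ
    refine (((hD τ hτ).fun_pow 2).mul ((hasDerivAt_id' τ).const_mul (2 * l)).exp).congr_deriv ?_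
    ring
  have hVanti : AntitoneOn V (Ici 0) := by
    refine antitoneOn_of_hasDerivWithinAt_nonpos (f' := V') (convex_Ici 0) (by fun_prop)
      (fun τ hτ => ?_) fun τ hτ => ?_ <;> rw [interior_Ici] at hτ
    · exact (hV τ hτ).hasDerivWithinAt
    · have := hdiss τ hτ
      have := Real.exp_pos (2 * l * τ)
      nlinarith
  have hVt : (|D t| * Real.exp (l * t)) ^ 2 ≤ |D 0| ^ 2 := by
    calc (|D t| * Real.exp (l * t)) ^ 2 = V t := by
          rw [mul_pow, sq_abs, sq (Real.exp _), ← Real.exp_add, ← two_mul, ← mul_assoc]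
      _ ≤ V 0 := hVanti self_mem_Ici ht ht
      _ = |D 0| ^ 2 := by simp [V]
  have hexp := Real.exp_pos (l * t)
  rw [neg_mul, Real.exp_neg, ← div_eq_mul_inv, le_div_iff₀ hexp]
  exact (pow_le_pow_iff_left₀ (by positivity) (abs_nonneg _) two_ne_zero).1 hVt

lemma hasDerivAt_integral_of_continuousOn_Ici {f : ℝ → ℝ} (hf : ContinuousOn f (Ici 0))
    {τ : ℝ} (hτ : 0 < τ) : HasDerivAt (fun u => ∫ s in (0:ℝ)..u, f s) (f τ) τ :=
  intervalIntegral.integral_hasDerivAt_right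
    ((hf.mono (by rw [uIcc_of_le hτ.le]; exact Icc_subset_Ici_self)).intervalIntegrable)
    ((hf.mono Ioi_subset_Ici_self).stronglyMeasurableAtFilter isOpen_Ioi τ hτ)
    (hf.continuousAt (Ici_mem_nhds hτ))

lemma hasDerivAt_sub_of_eq_add_integral_add {y₁ y₂ f₁ f₂ n : ℝ → ℝ} {c₁ c₂ : ℝ}
    (hf₁ : ContinuousOn f₁ (Ici 0)) (hf₂ : ContinuousOn f₂ (Ici 0))
    (hy₁ : ∀ t ∈ Ici (0:ℝ), y₁ t = c₁ + (∫ s in (0:ℝ)..t, f₁ s) + n t)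
    (hy₂ : ∀ t ∈ Ici (0:ℝ), y₂ t = c₂ + (∫ s in (0:ℝ)..t, f₂ s) + n t)
    {τ : ℝ} (hτ : 0 < τ) :
    HasDerivAt (fun t => y₁ t - y₂ t) (f₁ τ - f₂ τ) τ := by
  refine (((hasDerivAt_integral_of_continuousOn_Ici hf₁ hτ).sub
    (hasDerivAt_integral_of_continuousOn_Ici hf₂ hτ)).const_add
      (c₁ - c₂)).congr_of_eventuallyEq ?_
  filter_upwards [Ici_mem_nhds hτ] with t ht
  rw [hy₁ t ht, hy₂ t ht, Pi.sub_apply]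
  ring

lemma continuousAt_mul_one_sub_rpow (β : ℝ) {v : ℝ} (hv : v ∈ Ioo (0:ℝ) 1) :
    ContinuousAt (fun v : ℝ => (v * (1 - v)) ^ (-β)) v :=
  (by fun_prop : ContinuousAt (fun v : ℝ => v * (1 - v)) v).rpow_const
    (Or.inl (by nlinarith [hv.1, hv.2]))

lemma intervalIntegrable_mul_one_sub_rpow {β : ℝ} (hβ : β < 1) :
    IntervalIntegrable (fun v : ℝ => (v * (1 - v)) ^ (-β)) volume 0 1 := by
  have hsing : IntervalIntegrable (fun v : ℝ => v ^ (-β)) volume 0 (1 / 2) :=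
    intervalIntegral.intervalIntegrable_rpow' (by linarith)
  have hreg : ContinuousOn (fun v : ℝ => (1 - v) ^ (-β)) (uIcc 0 (1 / 2)) := by
    refine ContinuousOn.rpow_const (by fun_prop) fun v hv => Or.inl ?_
    rw [uIcc_of_le (by norm_num)] at hv
    linarith [hv.2]
  have hleft : IntervalIntegrable (fun v : ℝ => (v * (1 - v)) ^ (-β)) volume 0 (1 / 2) := by
    refine (hsing.mul_continuousOn hreg).congr fun v hv => ?_
    rw [uIoc_of_le (by norm_num)] at hv
    exact (Real.mul_rpow hv.1.le (by linarith [hv.2])).symm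
  have hright : IntervalIntegrable (fun v : ℝ => (v * (1 - v)) ^ (-β)) volume (1 / 2) 1 := by
    convert (hleft.comp_sub_left 1).symm using 1
    · ext v
      ring_nf
    · norm_num
    · norm_num
  exact hleft.trans hright

lemma F1_sub_F1_eq_integral {β : ℝ} (hβ : β < 1) {a b : ℝ}
    (ha : a ∈ Icc (0:ℝ) 1) (hb : b ∈ Icc (0:ℝ) 1) :
    F1 β b - F1 β a = ∫ v in a..b, (v * (1 - v)) ^ (-β) := by
  have hint : ∀ c ∈ Icc (0:ℝ) 1,
      IntervalIntegrable (fun v : ℝ => (v * (1 - v)) ^ (-β)) volume 0 c := fun c hc =>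
    (intervalIntegrable_mul_one_sub_rpow hβ).mono_set
      (uIcc_subset_uIcc left_mem_uIcc (by rwa [uIcc_of_le zero_le_one]))
  exact intervalIntegral.integral_interval_sub_left (hint b hb) (hint a ha)

lemma sub_le_F1_sub_F1 {β : ℝ} (hβ0 : 0 ≤ β) (hβ1 : β < 1) {a b : ℝ}
    (ha : a ∈ Icc (0:ℝ) 1) (hb : b ∈ Icc (0:ℝ) 1) (hab : a ≤ b) :
    b - a ≤ F1 β b - F1 β a := by
  have hint : IntervalIntegrable (fun v : ℝ => (v * (1 - v)) ^ (-β)) volume a b :=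
    (intervalIntegrable_mul_one_sub_rpow hβ1).mono_set
      (by rw [uIcc_of_le zero_le_one]; exact uIcc_subset_Icc ha hb)
  have hge : ∀ v ∈ Ioo a b, 1 ≤ (v * (1 - v)) ^ (-β) := fun v hv => by
    have hv0 : 0 < v := ha.1.trans_lt hv.1
    have hv1 : v < 1 := hv.2.trans_le hb.2
    exact Real.one_le_rpow_of_pos_of_le_one_of_nonpos (by nlinarith) (by nlinarith)
      (by linarith)
  rw [F1_sub_F1_eq_integral hβ1 ha hb]
  calc b - a = ∫ _ in a..b, (1 : ℝ) := by simp
    _ ≤ ∫ v in a..b, (v * (1 - v)) ^ (-β) :=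
      intervalIntegral.integral_mono_on_of_le_Ioo hab intervalIntegrable_const hint hge

lemma continuousOn_F1 {β : ℝ} (hβ : β < 1) : ContinuousOn (F1 β) (Icc 0 1) := by
  have := intervalIntegral.continuousOn_primitive_interval'
    (intervalIntegrable_mul_one_sub_rpow hβ) left_mem_uIcc
  rwa [uIcc_of_le zero_le_one] at this

lemma hasDerivAt_F1 {β : ℝ} (hβ : β < 1) {x : ℝ} (hx : x ∈ Ioo (0:ℝ) 1) :
    HasDerivAt (F1 β) ((x * (1 - x)) ^ (-β)) x :=
  intervalIntegral.integral_hasDerivAt_right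
    ((intervalIntegrable_mul_one_sub_rpow hβ).mono_set
      (uIcc_subset_uIcc_left (by rw [uIcc_of_le zero_le_one]; exact Ioo_subset_Icc_self hx)))
    (ContinuousAt.stronglyMeasurableAtFilter isOpen_Ioo
      (fun _ hv => continuousAt_mul_one_sub_rpow β hv) x hx)
    (continuousAt_mul_one_sub_rpow β hx)

lemma strictMonoOn_F1 {β : ℝ} (hβ0 : 0 ≤ β) (hβ1 : β < 1) :
    StrictMonoOn (F1 β) (Icc 0 1) :=
  fun a ha b hb hab => by linarith [sub_le_F1_sub_F1 hβ0 hβ1 ha hb hab.le]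

lemma F1inv_mem_Ioo_and_F1_F1inv {β : ℝ} (hβ : β < 1) {z : ℝ}
    (hz : z ∈ Ioo 0 (F1 β 1)) : F1inv β z ∈ Ioo (0:ℝ) 1 ∧ F1 β (F1inv β z) = z := by
  have hF1_zero : F1 β 0 = 0 := intervalIntegral.integral_same
  have hsurj : ∃ x ∈ Icc (0:ℝ) 1, F1 β x = z :=
    intermediate_value_Icc zero_le_one (continuousOn_F1 hβ)
      (by rw [hF1_zero]; exact Ioo_subset_Icc_self hz)
  have hmem : F1inv β z ∈ Icc (0:ℝ) 1 := Function.invFunOn_mem hsurj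
  have heq : F1 β (F1inv β z) = z := Function.invFunOn_eq hsurj
  refine ⟨⟨hmem.1.lt_of_ne ?_, hmem.2.lt_of_ne ?_⟩, heq⟩
  · rintro h
    rw [← h, hF1_zero] at heq
    exact hz.1.ne heq
  · rintro h
    rw [h] at heq
    exact hz.2.ne' heq

lemma lipschitzOnWith_F1inv {β : ℝ} (hβ0 : 0 ≤ β) (hβ1 : β < 1) :
    LipschitzOnWith 1 (F1inv β) (Ioo 0 (F1 β 1)) := by
  refine LipschitzOnWith.of_dist_le_mul fun z₁ hz₁ z₂ hz₂ => ?_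
  obtain ⟨hx₁, hz₁⟩ := F1inv_mem_Ioo_and_F1_F1inv hβ1 hz₁
  obtain ⟨hx₂, hz₂⟩ := F1inv_mem_Ioo_and_F1_F1inv hβ1 hz₂
  rw [NNReal.coe_one, one_mul, Real.dist_eq, Real.dist_eq]
  calc |F1inv β z₁ - F1inv β z₂| ≤ |F1 β (F1inv β z₁) - F1 β (F1inv β z₂)| :=
        abs_sub_le_abs_sub_of_sub_le_sub (fun a ha b hb => sub_le_F1_sub_F1 hβ0 hβ1 ha hb)
          (Ioo_subset_Icc_self hx₁) (Ioo_subset_Icc_self hx₂)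
    _ = |z₁ - z₂| := by rw [hz₁, hz₂]

lemma monotoneOn_F1inv {β : ℝ} (hβ0 : 0 ≤ β) (hβ1 : β < 1) :
    MonotoneOn (F1inv β) (Ioo 0 (F1 β 1)) := by
  intro z₁ hz₁ z₂ hz₂ hz
  obtain ⟨hx₁, hz₁⟩ := F1inv_mem_Ioo_and_F1_F1inv hβ1 hz₁
  obtain ⟨hx₂, hz₂⟩ := F1inv_mem_Ioo_and_F1_F1inv hβ1 hz₂
  rwa [← (strictMonoOn_F1 hβ0 hβ1).le_iff_le (Ioo_subset_Icc_self hx₁)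
    (Ioo_subset_Icc_self hx₂), hz₁, hz₂]

lemma hasDerivAt_G (β θ μ : ℝ) {x : ℝ} (hx : x ∈ Ioo (0:ℝ) 1) :
    HasDerivAt (G β θ μ)
      (-θ * (x * (1 - x)) ^ (-β)
        + θ * (μ - x) * ((1 - 2 * x) * (-β) * (x * (1 - x)) ^ (-β - 1))) x := by
  have hp : x * (1 - x) ≠ 0 := by nlinarith [hx.1, hx.2]
  have hlin : HasDerivAt (fun x : ℝ => θ * (μ - x)) (-θ) x := by
    simpa using ((hasDerivAt_id x).const_sub μ).const_mul θ
  have hquad : HasDerivAt (fun x : ℝ => x * (1 - x)) (1 - 2 * x) x := by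
    refine ((hasDerivAt_id' x).mul ((hasDerivAt_id' x).const_sub 1)).congr_deriv ?_
    linarith
  exact hlin.mul (hquad.rpow_const (Or.inl hp))

lemma antitoneOn_G_add_mul_F1 {β θ μ : ℝ} (hβ0 : 0 ≤ β) (hβ1 : β < 1) (hθ : 0 ≤ θ)
    (hμ : μ ∈ Icc (0:ℝ) 1) :
    AntitoneOn (fun x => G β θ μ x + θ * (1 - β) * F1 β x) (Ioo 0 1) := by
  have hderiv : ∀ x ∈ Ioo (0:ℝ) 1,
      HasDerivAt (fun x => G β θ μ x + θ * (1 - β) * F1 β x)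
        (-(θ * β * (x * (1 - x)) ^ (-β - 1) * ((x - μ) ^ 2 + μ * (1 - μ)))) x := by
    intro x hx
    have hp : x * (1 - x) ≠ 0 := by nlinarith [hx.1, hx.2]
    refine ((hasDerivAt_G β θ μ hx).add
      ((hasDerivAt_F1 hβ1 hx).const_mul (θ * (1 - β)))).congr_deriv ?_
    have hsplit : (x * (1 - x)) ^ (-β) = (x * (1 - x)) ^ (-β - 1) * (x * (1 - x)) := by
      rw [← Real.rpow_add_one hp, sub_add_cancel]
    rw [hsplit]
    ring
  refine antitoneOn_of_hasDerivWithinAt_nonpos (convex_Ioo 0 1)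
    (fun x hx => (hderiv x hx).continuousAt.continuousWithinAt)
    (fun x hx => (hderiv x (interior_subset hx)).hasDerivWithinAt) fun x hx => ?_
  rw [interior_Ioo] at hx
  have hp : 0 ≤ (x * (1 - x)) ^ (-β - 1) := Real.rpow_nonneg (by nlinarith [hx.1, hx.2]) _
  have hq : 0 ≤ (x - μ) ^ 2 + μ * (1 - μ) := by nlinarith [hμ.1, hμ.2]
  have := mul_nonneg (mul_nonneg (mul_nonneg hθ hβ0) hp) hq
  linarith

lemma antitoneOn_G_comp_F1inv_add_mul {β θ μ : ℝ} (hβ0 : 0 ≤ β) (hβ1 : β < 1)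
    (hθ : 0 ≤ θ) (hμ : μ ∈ Icc (0:ℝ) 1) :
    AntitoneOn (fun z => G β θ μ (F1inv β z) + θ * (1 - β) * z) (Ioo 0 (F1 β 1)) := by
  intro a ha b hb hab
  obtain ⟨hxa, hza⟩ := F1inv_mem_Ioo_and_F1_F1inv hβ1 ha
  obtain ⟨hxb, hzb⟩ := F1inv_mem_Ioo_and_F1_F1inv hβ1 hb
  have := antitoneOn_G_add_mul_F1 hβ0 hβ1 hθ hμ hxa hxb (monotoneOn_F1inv hβ0 hβ1 ha hb hab)
  simpa only [hza, hzb] using this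

lemma continuousOn_G_comp_F1inv {β : ℝ} (θ μ : ℝ) (hβ0 : 0 ≤ β) (hβ1 : β < 1) :
    ContinuousOn (fun z => G β θ μ (F1inv β z)) (Ioo 0 (F1 β 1)) :=
  ContinuousOn.comp (fun _ hx => (hasDerivAt_G β θ μ hx).continuousAt.continuousWithinAt)
    (lipschitzOnWith_F1inv hβ0 hβ1).continuousOn
    fun _ hz => (F1inv_mem_Ioo_and_F1_F1inv hβ1 hz).1

theorem stmt15 (α β θ μ γ : ℝ) (hα : α ∈ Set.Ioc (0:ℝ) 1)
    (hβ : β ∈ Set.Ioo (1 - α) 1) (hθ : 0 < θ) (hμ : μ ∈ Set.Ioo (0:ℝ) 1) :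
    ∃ C : ℝ, 0 < C ∧ ∃ l : ℝ, 0 < l ∧
      ∀ w : ℝ → ℝ, w 0 = 0 →
        (∀ T > (0:ℝ), ∃ K : ℝ, ∀ s ∈ Set.Icc (0:ℝ) T, ∀ t ∈ Set.Icc (0:ℝ) T,
          |w t - w s| ≤ K * |t - s| ^ α) →
        ∀ x₀1 ∈ Set.Ioo (0:ℝ) 1, ∀ x₀2 ∈ Set.Ioo (0:ℝ) 1,
        ∀ y1 y2 : ℝ → ℝ,
          (ContinuousOn y1 (Set.Ici 0) ∧
           (∀ t ∈ Set.Ici (0:ℝ), y1 t ∈ Set.Ioo 0 (F1 β 1)) ∧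
           (∀ t ∈ Set.Ici (0:ℝ),
             y1 t = F1 β x₀1 + (∫ s in (0:ℝ)..t, G β θ μ (F1inv β (y1 s))) + γ * θ ^ β * w t)) →
          (ContinuousOn y2 (Set.Ici 0) ∧
           (∀ t ∈ Set.Ici (0:ℝ), y2 t ∈ Set.Ioo 0 (F1 β 1)) ∧
           (∀ t ∈ Set.Ici (0:ℝ),
             y2 t = F1 β x₀2 + (∫ s in (0:ℝ)..t, G β θ μ (F1inv β (y2 s))) + γ * θ ^ β * w t)) →
          ∀ t ∈ Set.Ici (0:ℝ),
            |F1inv β (y1 t) - F1inv β (y2 t)| ≤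
              C * |F1 β x₀1 - F1 β x₀2| * Real.exp (-l * t) := by
  have hβ0 : 0 ≤ β := by linarith [hα.2, hβ.1]
  have hβ1 : β < 1 := hβ.2
  refine ⟨1, one_pos, θ * (1 - β), mul_pos hθ (sub_pos.2 hβ1), ?_⟩
  rintro w hw0 - x₀1 - x₀2 - y1 y2 ⟨hc1, hm1, he1⟩ ⟨hc2, hm2, he2⟩ t ht
  have hdrift := continuousOn_G_comp_F1inv θ μ hβ0 hβ1
  have hdiss := antitoneOn_G_comp_F1inv_add_mul hβ0 hβ1 hθ.le (Ioo_subset_Icc_self hμ)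
  have hD0 : y1 0 - y2 0 = F1 β x₀1 - F1 β x₀2 := by
    rw [he1 0 self_mem_Ici, he2 0 self_mem_Ici, hw0]
    simp
  have hcontract := abs_le_abs_mul_exp_of_hasDerivAt (hc1.sub hc2)
    (fun τ hτ => hasDerivAt_sub_of_eq_add_integral_add (hdrift.comp hc1 hm1)
      (hdrift.comp hc2 hm2) he1 he2 hτ)
    (fun τ hτ => sub_mul_sub_le_of_antitoneOn_add_mul hdiss (hm1 τ hτ.le) (hm2 τ hτ.le)) ht
  calc |F1inv β (y1 t) - F1inv β (y2 t)| ≤ |y1 t - y2 t| := by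
        simpa [Real.dist_eq] using
          (lipschitzOnWith_F1inv hβ0 hβ1).dist_le_mul _ (hm1 t ht) _ (hm2 t ht)
    _ ≤ 1 * |F1 β x₀1 - F1 β x₀2| * Real.exp (-(θ * (1 - β)) * t) := by
        rw [one_mul, ← hD0]
        exact hcontract
end

section
/- For every A ∈ ℝ and every B > 0, there exists a unique y ∈ (0, F₁(1)) such that y - B·(G ∘ F₁⁻¹)(y) - A = 0. Consequently, for every n ∈ ℕ*, every T > 0, every y₀ ∈ (0, F₁(1)) and every function w : [0,T] → ℝ, the implicit Euler recurrence y₀ⁿ = y₀, y_{k+1}ⁿ = y_kⁿ + (T/n)·(G ∘ F₁⁻¹)(y_{k+1}ⁿ) + γθ^β (w_{t_{k+1}ⁿ} - w_{t_kⁿ}) with t_kⁿ := kT/n admits a unique solution, and y_kⁿ ∈ (0, F₁(1)) for every k = 0, …, n. -/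
open Set Filter Topology MeasureTheory intervalIntegral

theorem existsUnique_implicit_recursion {α : Type*} {S : Set α} (R : ℕ → α → α → Prop)
    (hR : ∀ k x, ∃! y, y ∈ S ∧ R k x y) (n : ℕ) {y₀ : α} (hy₀ : y₀ ∈ S) :
    ∃ Y : ℕ → α, (Y 0 = y₀ ∧ (∀ k < n, R k (Y k) (Y (k + 1))) ∧ ∀ k ≤ n, Y k ∈ S) ∧
      ∀ Y' : ℕ → α, (Y' 0 = y₀ ∧ (∀ k < n, R k (Y' k) (Y' (k + 1))) ∧ ∀ k ≤ n, Y' k ∈ S) →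
        ∀ k ≤ n, Y' k = Y k := by
  choose next hnext huniq using hR
  let Y : ℕ → α := fun k => Nat.rec y₀ next k
  refine ⟨Y, ⟨rfl, fun k _ => (hnext k (Y k)).2, ?_⟩, ?_⟩
  · rintro (_ | k) _
    exacts [hy₀, (hnext k (Y k)).1]
  · rintro Y' ⟨h₀, hrec, hmem⟩ k hk
    induction k with
    | zero => exact h₀
    | succ k ih =>
      have hk' : k < n := hk
      exact huniq k (Y k) _ ⟨hmem _ hk, ih hk'.le ▸ hrec k hk'⟩

theorem existsUnique_eq_of_strictMonoOn_Ioo {a b : ℝ} (hab : a < b) {f : ℝ → ℝ}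
    (hmono : StrictMonoOn f (Ioo a b)) (hcont : ContinuousOn f (Ioo a b))
    (hbot : Tendsto f (𝓝[>] a) atBot) (htop : Tendsto f (𝓝[<] b) atTop) (c : ℝ) :
    ∃! x, x ∈ Ioo a b ∧ f x = c := by
  obtain ⟨x, hx, hfx⟩ := hcont.surjOn_of_tendsto (nonempty_Ioo.2 hab)
    ((tendsto_comp_coe_Ioo_atBot hab).2 hbot) ((tendsto_comp_coe_Ioo_atTop hab).2 htop)
    (mem_univ c)
  exact ⟨x, ⟨hx, hfx⟩, fun y hy => hmono.injOn hy.1 hx (hy.2.trans hfx.symm)⟩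

variable {β θ μ : ℝ}

lemma mul_one_sub_rpow_neg_le (hβ₀ : 0 ≤ β) {v : ℝ} (hv : v ∈ Ioc 0 (1 / 2)) :
    (v * (1 - v)) ^ (-β) ≤ 2 ^ β * v ^ (-β) := by
  obtain ⟨hv₀, hv₁⟩ := hv
  calc (v * (1 - v)) ^ (-β) ≤ (v / 2) ^ (-β) :=
        Real.rpow_le_rpow_of_nonpos (by positivity) (by nlinarith) (neg_nonpos.2 hβ₀)
    _ = 2 ^ β * v ^ (-β) := by
        rw [Real.div_rpow hv₀.le zero_le_two, Real.rpow_neg zero_le_two, div_inv_eq_mul, mul_comm]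

lemma intervalIntegrable_mul_one_sub_rpow_neg_zero_half (hβ₀ : 0 ≤ β) (hβ₁ : β < 1) :
    IntervalIntegrable (fun v : ℝ => (v * (1 - v)) ^ (-β)) volume 0 (1 / 2) := by
  refine ((intervalIntegrable_rpow' (by linarith : -1 < -β)).const_mul (2 ^ β)).mono_fun'
    (by fun_prop : Measurable fun v : ℝ => (v * (1 - v)) ^ (-β)).aestronglyMeasurable ?_
  filter_upwards [ae_restrict_mem measurableSet_uIoc] with v hv
  rw [uIoc_of_le (by norm_num)] at hv
  rw [Real.norm_of_nonneg (Real.rpow_nonneg (by nlinarith [hv.1, hv.2]) _)]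
  exact mul_one_sub_rpow_neg_le hβ₀ hv

lemma intervalIntegrable_mul_one_sub_rpow_neg (hβ₀ : 0 ≤ β) (hβ₁ : β < 1) :
    IntervalIntegrable (fun v : ℝ => (v * (1 - v)) ^ (-β)) volume 0 1 := by
  have h := intervalIntegrable_mul_one_sub_rpow_neg_zero_half hβ₀ hβ₁
  refine h.trans ?_
  -- the integrand is symmetric under `v ↦ 1 - v`
  convert (h.comp_sub_left 1).symm using 1 <;> norm_num
  ext v; ring_nf

lemma intervalIntegrable_mul_one_sub_rpow_neg_of_mem (hβ₀ : 0 ≤ β) (hβ₁ : β < 1) {a b : ℝ}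
    (ha : a ∈ Icc 0 1) (hb : b ∈ Icc 0 1) :
    IntervalIntegrable (fun v : ℝ => (v * (1 - v)) ^ (-β)) volume a b := by
  rw [← uIcc_of_le zero_le_one] at ha hb
  exact (intervalIntegrable_mul_one_sub_rpow_neg hβ₀ hβ₁).mono_set (uIcc_subset_uIcc ha hb)

lemma F1_zero : F1 β 0 = 0 := intervalIntegral.integral_same

lemma F1_strictMonoOn (hβ₀ : 0 ≤ β) (hβ₁ : β < 1) : StrictMonoOn (F1 β) (Icc 0 1) := by
  intro a ha b hb hab
  have hint := intervalIntegrable_mul_one_sub_rpow_neg_of_mem hβ₀ hβ₁ ha hb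
  have hpos : 0 < ∫ v in a..b, (v * (1 - v)) ^ (-β) :=
    intervalIntegral_pos_of_pos_on hint (fun v hv => Real.rpow_pos_of_pos
      (mul_pos (ha.1.trans_lt hv.1) (sub_pos.2 (hv.2.trans_le hb.2))) _) hab
  have hadd : F1 β a + ∫ v in a..b, (v * (1 - v)) ^ (-β) = F1 β b :=
    integral_add_adjacent_intervals
      (intervalIntegrable_mul_one_sub_rpow_neg_of_mem hβ₀ hβ₁ (left_mem_Icc.2 zero_le_one) ha) hint
  linarith

lemma F1_continuousOn (hβ₀ : 0 ≤ β) (hβ₁ : β < 1) : ContinuousOn (F1 β) (Icc 0 1) := by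
  have h := continuousOn_primitive_interval' (intervalIntegrable_mul_one_sub_rpow_neg hβ₀ hβ₁)
    (left_mem_uIcc (a := (0 : ℝ)) (b := 1))
  rwa [uIcc_of_le zero_le_one] at h

lemma F1_bijOn (hβ₀ : 0 ≤ β) (hβ₁ : β < 1) : BijOn (F1 β) (Ioo 0 1) (Ioo 0 (F1 β 1)) := by
  have hmono := F1_strictMonoOn hβ₀ hβ₁
  refine ⟨fun x hx => ?_, hmono.injOn.mono Ioo_subset_Icc_self, ?_⟩
  · rw [← F1_zero (β := β)]
    exact ⟨hmono (left_mem_Icc.2 zero_le_one) (Ioo_subset_Icc_self hx) hx.1,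
      hmono (Ioo_subset_Icc_self hx) (right_mem_Icc.2 zero_le_one) hx.2⟩
  · simpa only [F1_zero, SurjOn] using intermediate_value_Ioo zero_le_one (F1_continuousOn hβ₀ hβ₁)

lemma F1inv_F1 (hβ₀ : 0 ≤ β) (hβ₁ : β < 1) {x : ℝ} (hx : x ∈ Icc 0 1) :
    F1inv β (F1 β x) = x :=
  (F1_strictMonoOn hβ₀ hβ₁).injOn.leftInvOn_invFunOn hx

lemma G_continuousOn : ContinuousOn (G β θ μ) (Ioo 0 1) :=
  (continuousOn_const.mul (continuousOn_const.sub continuousOn_id)).mul <|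
    (continuousOn_id.mul (continuousOn_const.sub continuousOn_id)).rpow_const fun _ hx =>
      Or.inl (mul_pos hx.1 (sub_pos.2 hx.2)).ne'

lemma G_strictAntiOn (hβ₀ : 0 ≤ β) (hβ₁ : β < 1) (hθ : 0 < θ) (hμ : μ ∈ Ioo 0 1) :
    StrictAntiOn (G β θ μ) (Ioo 0 1) := by
  refine strictAntiOn_of_deriv_neg (convex_Ioo 0 1) G_continuousOn fun x hx => ?_
  rw [interior_Ioo] at hx
  have hu : 0 < x * (1 - x) := mul_pos hx.1 (sub_pos.2 hx.2)
  have hG : HasDerivAt (G β θ μ) (θ * -1 * (x * (1 - x)) ^ (-β) + θ * (μ - x) *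
      ((1 * (1 - x) + x * -1) * -β * (x * (1 - x)) ^ (-β - 1))) x :=
    (((hasDerivAt_id x).const_sub μ).const_mul θ).mul
      (((hasDerivAt_id x).mul ((hasDerivAt_id x).const_sub 1)).rpow_const (Or.inl hu.ne'))
  have hpow : (x * (1 - x)) ^ (-β) = (x * (1 - x)) ^ (-β - 1) * (x * (1 - x)) := by
    rw [← Real.rpow_add_one hu.ne', sub_add_cancel]
  have hderiv : deriv (G β θ μ) x = -(θ * (x * (1 - x)) ^ (-β - 1) *
      (x * (1 - x) + β * (μ - x) * (1 - 2 * x))) := by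
    rw [hG.deriv, hpow]; ring
  have hfactor : 0 < x * (1 - x) + β * (μ - x) * (1 - 2 * x) := by
    have hμ' : 0 < μ * (1 - μ) := mul_pos hμ.1 (sub_pos.2 hμ.2)
    have key : x * (1 - x) + β * (μ - x) * (1 - 2 * x)
        = (1 - β) * (x * (1 - x)) + β * ((x - μ) ^ 2 + μ * (1 - μ)) := by ring
    rw [key]
    nlinarith [mul_pos (sub_pos.2 hβ₁) hu,
      mul_nonneg hβ₀ (add_pos_of_nonneg_of_pos (sq_nonneg (x - μ)) hμ').le]
  rw [hderiv, neg_lt_zero]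
  exact mul_pos (mul_pos hθ (Real.rpow_pos_of_pos hu _)) hfactor

lemma tendsto_mul_one_sub_nhdsGT_zero :
    Tendsto (fun x : ℝ => x * (1 - x)) (𝓝[>] 0) (𝓝[>] 0) := by
  refine tendsto_nhdsWithin_iff.2 ⟨?_, ?_⟩
  · exact ((continuous_id.mul (continuous_const.sub continuous_id)).tendsto' 0 0
      (by simp)).mono_left nhdsWithin_le_nhds
  · filter_upwards [Ioo_mem_nhdsGT zero_lt_one] with x hx using mul_pos hx.1 (sub_pos.2 hx.2)

lemma tendsto_mul_one_sub_nhdsLT_one :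
    Tendsto (fun x : ℝ => x * (1 - x)) (𝓝[<] 1) (𝓝[>] 0) := by
  refine tendsto_nhdsWithin_iff.2 ⟨?_, ?_⟩
  · exact ((continuous_id.mul (continuous_const.sub continuous_id)).tendsto' 1 0
      (by simp)).mono_left nhdsWithin_le_nhds
  · filter_upwards [Ioo_mem_nhdsLT zero_lt_one] with x hx using mul_pos hx.1 (sub_pos.2 hx.2)

lemma tendsto_G_nhdsGT_zero (hβ : 0 < β) (hθ : 0 < θ) (hμ : 0 < μ) :
    Tendsto (G β θ μ) (𝓝[>] 0) atTop := by
  have h : Tendsto (fun x : ℝ => θ * (μ - x)) (𝓝[>] 0) (𝓝 (θ * μ)) :=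
    ((continuous_const.mul (continuous_const.sub continuous_id)).tendsto' 0 _
      (by simp)).mono_left nhdsWithin_le_nhds
  exact h.pos_mul_atTop (mul_pos hθ hμ)
    ((tendsto_rpow_neg_nhdsGT_zero (neg_lt_zero.2 hβ)).comp tendsto_mul_one_sub_nhdsGT_zero)

lemma tendsto_G_nhdsLT_one (hβ : 0 < β) (hθ : 0 < θ) (hμ : μ < 1) :
    Tendsto (G β θ μ) (𝓝[<] 1) atBot := by
  have h : Tendsto (fun x : ℝ => θ * (μ - x)) (𝓝[<] 1) (𝓝 (θ * (μ - 1))) :=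
    ((continuous_const.mul (continuous_const.sub continuous_id)).tendsto' 1 _
      (by simp)).mono_left nhdsWithin_le_nhds
  exact h.neg_mul_atTop (mul_neg_of_pos_of_neg hθ (sub_neg.2 hμ))
    ((tendsto_rpow_neg_nhdsGT_zero (neg_lt_zero.2 hβ)).comp tendsto_mul_one_sub_nhdsLT_one)

lemma existsUnique_F1_sub_mul_G_eq_zero (hβ : β ∈ Ioo 0 1) (hθ : 0 < θ) (hμ : μ ∈ Ioo 0 1)
    (A : ℝ) {B : ℝ} (hB : 0 < B) :
    ∃! x, x ∈ Ioo 0 1 ∧ F1 β x - B * G β θ μ x - A = 0 := by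
  set Φ : ℝ → ℝ := fun x => F1 β x - B * G β θ μ x - A
  have hF1 := F1_continuousOn hβ.1.le hβ.2
  have hmono : StrictMonoOn Φ (Ioo 0 1) := fun x hx y hy hxy => by
    have := (F1_strictMonoOn hβ.1.le hβ.2) (Ioo_subset_Icc_self hx) (Ioo_subset_Icc_self hy) hxy
    have := mul_lt_mul_of_pos_left (G_strictAntiOn hβ.1.le hβ.2 hθ hμ hx hy hxy) hB
    simp only [Φ]
    linarith
  have hcont : ContinuousOn Φ (Ioo 0 1) :=
    ((hF1.mono Ioo_subset_Icc_self).sub (continuousOn_const.mul G_continuousOn)).sub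
      continuousOn_const
  have hbot : Tendsto Φ (𝓝[>] 0) atBot := by
    have hF1_zero : Tendsto (F1 β) (𝓝[>] 0) (𝓝 0) := by
      simpa only [F1_zero] using ((hF1 0 (left_mem_Icc.2 zero_le_one)).mono_of_mem_nhdsWithin
        (Icc_mem_nhdsGT zero_lt_one)).tendsto
    refine ((hF1_zero.sub_const A).add_atBot (tendsto_neg_atTop_atBot.comp
      ((tendsto_G_nhdsGT_zero hβ.1 hθ hμ.1).const_mul_atTop hB))).congr fun x => ?_
    simp only [Φ, Function.comp_apply]
    ring
  have htop : Tendsto Φ (𝓝[<] 1) atTop := by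
    have hF1_one : Tendsto (F1 β) (𝓝[<] 1) (𝓝 (F1 β 1)) :=
      ((hF1 1 (right_mem_Icc.2 zero_le_one)).mono_of_mem_nhdsWithin
        (Icc_mem_nhdsLT zero_lt_one)).tendsto
    refine ((hF1_one.sub_const A).add_atTop (tendsto_neg_atBot_atTop.comp
      ((tendsto_G_nhdsLT_one hβ.1 hθ hμ.2).const_mul_atBot hB))).congr fun x => ?_
    simp only [Φ, Function.comp_apply]
    ring
  exact existsUnique_eq_of_strictMonoOn_Ioo zero_lt_one hmono hcont hbot htop 0

lemma existsUnique_sub_mul_G_F1inv_sub_eq_zero (hβ : β ∈ Ioo 0 1) (hθ : 0 < θ)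
    (hμ : μ ∈ Ioo 0 1) (A : ℝ) {B : ℝ} (hB : 0 < B) :
    ∃! y, y ∈ Ioo 0 (F1 β 1) ∧ y - B * G β θ μ (F1inv β y) - A = 0 := by
  have hF1 := F1_bijOn hβ.1.le hβ.2
  have hinv : ∀ x ∈ Ioo 0 1, F1inv β (F1 β x) = x := fun x hx =>
    F1inv_F1 hβ.1.le hβ.2 (Ioo_subset_Icc_self hx)
  obtain ⟨x, ⟨hx, hΦx⟩, huniq⟩ := existsUnique_F1_sub_mul_G_eq_zero hβ hθ hμ A hB
  refine ⟨F1 β x, ⟨hF1.mapsTo hx, by rwa [hinv x hx]⟩, ?_⟩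
  rintro _ ⟨hy, hy₀⟩
  obtain ⟨x', hx', rfl⟩ := hF1.surjOn hy
  rw [hinv x' hx'] at hy₀
  rw [huniq x' ⟨hx', hy₀⟩]

theorem stmt16 (β θ μ γ : ℝ) (hβ : β ∈ Set.Ioo (0:ℝ) 1) (hθ : 0 < θ)
    (hμ : μ ∈ Set.Ioo (0:ℝ) 1) :
    (∀ A : ℝ, ∀ B : ℝ, 0 < B →
      ∃! y : ℝ, y ∈ Set.Ioo 0 (F1 β 1) ∧ y - B * G β θ μ (F1inv β y) - A = 0) ∧
    (∀ n : ℕ, 0 < n → ∀ T : ℝ, 0 < T → ∀ y₀ ∈ Set.Ioo 0 (F1 β 1), ∀ w : ℝ → ℝ,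
      ∃ Y : ℕ → ℝ,
        (Y 0 = y₀ ∧
         (∀ k < n, Y (k + 1) = Y k + (T / n) * G β θ μ (F1inv β (Y (k + 1))) +
            γ * θ ^ β * (w (((k : ℝ) + 1) * T / n) - w ((k : ℝ) * T / n))) ∧
         (∀ k ≤ n, Y k ∈ Set.Ioo 0 (F1 β 1))) ∧
        ∀ Y' : ℕ → ℝ,
          (Y' 0 = y₀ ∧
           (∀ k < n, Y' (k + 1) = Y' k + (T / n) * G β θ μ (F1inv β (Y' (k + 1))) +
              γ * θ ^ β * (w (((k : ℝ) + 1) * T / n) - w ((k : ℝ) * T / n))) ∧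
           (∀ k ≤ n, Y' k ∈ Set.Ioo 0 (F1 β 1))) →
          ∀ k ≤ n, Y' k = Y k) := by
  refine ⟨fun A B hB => existsUnique_sub_mul_G_F1inv_sub_eq_zero hβ hθ hμ A hB,
    fun n hn T hT y₀ hy₀ w => ?_⟩
  refine existsUnique_implicit_recursion (fun k x y => y = x + T / n * G β θ μ (F1inv β y) +
    γ * θ ^ β * (w ((k + 1) * T / n) - w (k * T / n))) (fun k x => ?_) n hy₀
  refine (existsUnique_congr fun y => and_congr_right fun _ => ?_).1
    (existsUnique_sub_mul_G_F1inv_sub_eq_zero hβ hθ hμ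
      (x + γ * θ ^ β * (w ((k + 1) * T / n) - w (k * T / n))) (by positivity : 0 < T / n))
  constructor <;> intro h <;> linarith
end
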